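/- Let μ be a product probability measure on X = X₁ × … × X_n (finite probability spaces) and let d denote Hamming distance (number of differing coordinates). For any nonempty subsets B, B' ⊆ X, the Hamming distance between B and B' satisfies d(B,B') ≤ √((n/2)·ln(1/μ(B))) + √((n/2)·ln(1/μ(B'))). -/

import Mathlib

/-!
Write `d_C y` for the Hamming distance from `y` to `C`. Changing one coordinate of `y` moves
`d_C y` by at most one, so integrating out the coordinates one at a time and applying Hoeffding's
lemma at each step gives the bounded-differences estimate
`𝔼 exp (-t d_C) ≤ exp (-t 𝔼 d_C + n t² / 8)`. As `d_C` vanishes on `C`, the left side is at least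
`μ C`, and optimising in `t` gives `𝔼 d_C ≤ √((n/2) ln (1 / μ C))`. Some point `y` has
`d_B y + d_B' y` at most its mean, and the triangle inequality through `y` bounds `d(B, B')`.
-/

open Finset Function Real

open MeasureTheory ProbabilityTheory in
lemma sum_mul_exp_le_of_mem_Icc {α : Type*} [Fintype α] {w : α → ℝ} (hw : ∀ a, 0 ≤ w a)
    (hsum : ∑ a, w a = 1) {g : α → ℝ} {lo hi : ℝ} (hg : ∀ a, g a ∈ Set.Icc lo hi) (t : ℝ) :
    ∑ a, w a * exp (t * g a) ≤ exp (t * ∑ a, w a * g a + (hi - lo) ^ 2 * t ^ 2 / 8) := by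
  let _ : MeasurableSpace α := ⊤
  let μ : Measure α := ∑ a, ENNReal.ofReal (w a) • Measure.dirac a
  have : IsProbabilityMeasure μ := ⟨by
    simp [μ, ← ENNReal.ofReal_sum_of_nonneg fun a _ => hw a, hsum]⟩
  have integral_eq (f : α → ℝ) : ∫ x, f x ∂μ = ∑ a, w a * f a := by
    rw [integral_finsetSum_measure fun a _ =>
      Integrable.of_finite.smul_measure ENNReal.ofReal_ne_top]
    simp [integral_smul_measure, ENNReal.toReal_ofReal (hw _)]
  have hoeffding := (hasSubgaussianMGF_of_mem_Icc (μ := μ) (X := g)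
    (measurable_of_countable g).aemeasurable (ae_of_all _ hg)).mgf_le t
  simp only [mgf, integral_eq] at hoeffding
  set m := ∑ a, w a * g a
  have hc : (((‖hi - lo‖₊ / 2) ^ 2 : NNReal) : ℝ) = (hi - lo) ^ 2 / 4 := by
    push_cast [coe_nnnorm, Real.norm_eq_abs, div_pow, sq_abs]; ring
  calc ∑ a, w a * exp (t * g a) = exp (t * m) * ∑ a, w a * exp (t * (g a - m)) := by
        rw [mul_sum]; congr! 1 with a; rw [mul_left_comm, ← exp_add]; ring_nf
    _ ≤ exp (t * m) * exp ((hi - lo) ^ 2 / 4 * t ^ 2 / 2) := by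
        rw [← hc]; gcongr
    _ = exp (t * m + (hi - lo) ^ 2 * t ^ 2 / 8) := by rw [← exp_add]; ring_nf

def HasBoundedDifferences {ι : Type*} [DecidableEq ι] {X : ι → Type*} (c : ι → ℝ)
    (f : (∀ i, X i) → ℝ) : Prop :=
  ∀ i x a b, |f (update x i a) - f (update x i b)| ≤ c i

section PartialExpectation

variable {ι : Type*} [Fintype ι] [DecidableEq ι] {X : ι → Type*} [∀ i, Fintype (X i)]
  [∀ i, DecidableEq (X i)] (p : ∀ i, X i → ℝ)

def partialWeight (s : Finset ι) (x y : ∀ i, X i) : ℝ :=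
  ∏ i, if i ∈ s then p i (y i) else if y i = x i then 1 else 0

/-- Integrates `f` against `p` in the coordinates in `s`, the other coordinates being frozen at
those of `x`. -/
def partialExpect (s : Finset ι) (f : (∀ i, X i) → ℝ) (x : ∀ i, X i) : ℝ :=
  ∑ y, partialWeight p s x y * f y

lemma partialExpect_empty (f : (∀ i, X i) → ℝ) (x : ∀ i, X i) : partialExpect p ∅ f x = f x := by
  have : ∀ y, partialWeight p ∅ x y = if y = x then 1 else 0 := fun y => by
    simp [partialWeight, prod_ite_zero, funext_iff]
  simp [partialExpect, this]

lemma partialExpect_univ (f : (∀ i, X i) → ℝ) (x : ∀ i, X i) :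
    partialExpect p univ f x = ∑ y, (∏ i, p i (y i)) * f y := by
  simp [partialExpect, partialWeight]

lemma sum_mul_partialWeight_update {i : ι} {s : Finset ι} (hi : i ∉ s) (x y : ∀ i, X i) :
    ∑ a, p i a * partialWeight p s (update x i a) y = partialWeight p (insert i s) x y := by
  have rest : ∀ a, ∏ j ∈ univ.erase i,
      (if j ∈ s then p j (y j) else if y j = update x i a j then 1 else 0) =
      ∏ j ∈ univ.erase i, (if j ∈ insert i s then p j (y j) else if y j = x j then 1 else 0) :=
    fun a => prod_congr rfl fun j hj => by simp [ne_of_mem_erase hj]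
  simp only [partialWeight, ← mul_prod_erase univ _ (mem_univ i), rest]
  simp [hi]

lemma partialExpect_insert {i : ι} {s : Finset ι} (hi : i ∉ s) (f : (∀ i, X i) → ℝ)
    (x : ∀ i, X i) :
    partialExpect p (insert i s) f x = ∑ a, p i a * partialExpect p s f (update x i a) := by
  simp only [partialExpect, mul_sum, ← sum_mul_partialWeight_update p hi, sum_mul]
  rw [sum_comm]
  simp only [mul_assoc]

lemma abs_partialExpect_update_sub_le (hp_nonneg : ∀ i a, 0 ≤ p i a)
    (hp_sum : ∀ i, ∑ a, p i a = 1) {c : ι → ℝ} {f : (∀ i, X i) → ℝ}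
    (hf : HasBoundedDifferences c f) {i : ι} {s : Finset ι} (hi : i ∉ s) (x : ∀ i, X i)
    (a b : X i) :
    |partialExpect p s f (update x i a) - partialExpect p s f (update x i b)| ≤ c i := by
  induction s using Finset.induction_on generalizing x with
  | empty => simpa only [partialExpect_empty] using hf i x a b
  | insert j s hj ih =>
    have hij : i ≠ j := fun h => hi (h ▸ mem_insert_self i s)
    simp only [partialExpect_insert p hj, ← sum_sub_distrib, ← mul_sub]
    calc |∑ e, p j e * (partialExpect p s f (update (update x i a) j e) -
            partialExpect p s f (update (update x i b) j e))|
        ≤ ∑ e, p j e * c i := by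
          refine (abs_sum_le_sum_abs _ _).trans (sum_le_sum fun e _ => ?_)
          rw [abs_mul, abs_of_nonneg (hp_nonneg j e), update_comm hij a, update_comm hij b]
          exact mul_le_mul_of_nonneg_left (ih (fun h => hi (mem_insert_of_mem h)) _)
            (hp_nonneg j e)
      _ = c i := by rw [← sum_mul, hp_sum, one_mul]

lemma partialExpect_exp_le (hp_nonneg : ∀ i a, 0 ≤ p i a) (hp_sum : ∀ i, ∑ a, p i a = 1)
    {c : ι → ℝ} {f : (∀ i, X i) → ℝ} (hf : HasBoundedDifferences c f) (t : ℝ)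
    (s : Finset ι) (x : ∀ i, X i) :
    partialExpect p s (fun y => exp (t * f y)) x ≤
      exp (t * partialExpect p s f x + (∑ i ∈ s, c i ^ 2) * t ^ 2 / 8) := by
  induction s using Finset.induction_on generalizing x with
  | empty => simp [partialExpect_empty]
  | insert i s hi ih =>
    set g : X i → ℝ := fun a => partialExpect p s f (update x i a)
    obtain ⟨a₀, -, hmin⟩ := exists_min_image univ g
      (nonempty_of_sum_ne_zero ((hp_sum i).trans_ne one_ne_zero))
    have hg : ∀ a, g a ∈ Set.Icc (g a₀) (g a₀ + c i) := fun a =>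
      ⟨hmin a (mem_univ a), by
        linarith [(abs_le.1 (abs_partialExpect_update_sub_le p hp_nonneg hp_sum hf hi x a a₀)).2]⟩
    have hoeffding := sum_mul_exp_le_of_mem_Icc (hp_nonneg i) (hp_sum i) hg t
    rw [add_sub_cancel_left] at hoeffding
    rw [partialExpect_insert p hi, partialExpect_insert p hi, sum_insert hi]
    calc ∑ a, p i a * partialExpect p s (fun y => exp (t * f y)) (update x i a)
        ≤ ∑ a, p i a * exp (t * g a + (∑ j ∈ s, c j ^ 2) * t ^ 2 / 8) :=
          sum_le_sum fun a _ => mul_le_mul_of_nonneg_left (ih _) (hp_nonneg i a)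
      _ = (∑ a, p i a * exp (t * g a)) * exp ((∑ j ∈ s, c j ^ 2) * t ^ 2 / 8) := by
          simp only [exp_add, sum_mul, mul_assoc]
      _ ≤ exp (t * ∑ a, p i a * g a + c i ^ 2 * t ^ 2 / 8) *
            exp ((∑ j ∈ s, c j ^ 2) * t ^ 2 / 8) := by gcongr
      _ = exp (t * ∑ a, p i a * g a + (c i ^ 2 + ∑ j ∈ s, c j ^ 2) * t ^ 2 / 8) := by
          rw [← exp_add]; ring_nf

end PartialExpectation

section HammingDistToSet

variable {ι : Type*} [Fintype ι] {X : ι → Type*} [∀ i, DecidableEq (X i)]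

lemma hammingDist_update_le_one [DecidableEq ι] (x : ∀ i, X i) (i : ι) (a b : X i) :
    hammingDist (update x i a) (update x i b) ≤ 1 := by
  refine (card_le_card fun j hj => ?_).trans (card_singleton i).le
  by_contra hji
  simp_all [update_of_ne (Ne.intro (by simpa using hji))]

def infHammingDist (y : ∀ i, X i) (C : Finset (∀ i, X i)) (hC : C.Nonempty) : ℕ :=
  C.inf' hC (hammingDist y ·)

lemma infHammingDist_le_add (u v : ∀ i, X i) (C : Finset (∀ i, X i)) (hC : C.Nonempty) :
    infHammingDist u C hC ≤ hammingDist u v + infHammingDist v C hC := by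
  obtain ⟨z, hz, hvz⟩ := exists_mem_eq_inf' hC (hammingDist v ·)
  rw [infHammingDist, infHammingDist, hvz]
  exact (inf'_le _ hz).trans (hammingDist_triangle u v z)

lemma infHammingDist_eq_zero {y : ∀ i, X i} {C : Finset (∀ i, X i)} (hC : C.Nonempty)
    (hy : y ∈ C) : infHammingDist y C hC = 0 :=
  Nat.eq_zero_of_le_zero ((inf'_le _ hy).trans_eq (hammingDist_self y))

lemma hasBoundedDifferences_infHammingDist [DecidableEq ι] (C : Finset (∀ i, X i))
    (hC : C.Nonempty) : HasBoundedDifferences 1 (fun y => (infHammingDist y C hC : ℝ)) := by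
  intro i x a b
  have step (a b : X i) : (infHammingDist (update x i a) C hC : ℝ) ≤
      infHammingDist (update x i b) C hC + 1 := by
    have := infHammingDist_le_add (update x i a) (update x i b) C hC
    have := hammingDist_update_le_one x i a b
    exact_mod_cast (by omega)
  rw [abs_le]
  constructor <;> simp only [Pi.one_apply] <;> linarith [step a b, step b a]

lemma exists_hammingDist_le_infHammingDist_add (y : ∀ i, X i) {B B' : Finset (∀ i, X i)}
    (hB : B.Nonempty) (hB' : B'.Nonempty) :
    ∃ x ∈ B, ∃ x' ∈ B', hammingDist x x' ≤ infHammingDist y B hB + infHammingDist y B' hB' := by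
  obtain ⟨x, hx, hyx⟩ := exists_mem_eq_inf' hB (hammingDist y ·)
  obtain ⟨x', hx', hyx'⟩ := exists_mem_eq_inf' hB' (hammingDist y ·)
  exact ⟨x, hx, x', hx', by
    rw [infHammingDist, infHammingDist, hyx, hyx']; exact hammingDist_triangle_left x x' y⟩

end HammingDistToSet

lemma le_sqrt_of_forall_mul_sub_sq_le {m n L : ℝ} (hm : 0 ≤ m) (hn : 0 ≤ n)
    (h : ∀ t, t * m - n * t ^ 2 / 8 ≤ L) : m ≤ √(n / 2 * L) := by
  rcases hn.eq_or_lt with rfl | hn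
  · obtain rfl : m = 0 := by
      by_contra hm0
      have := h ((|L| + 1) / m)
      rw [zero_mul, zero_div, sub_zero, div_mul_cancel₀ _ hm0] at this
      linarith [le_abs_self L]
    exact sqrt_nonneg _
  · have := h (4 * m / n)
    field_simp at this
    exact le_sqrt_of_sq_le (by nlinarith)

lemma exists_le_sum_mul {α : Type*} [Fintype α] {w : α → ℝ} (hw : ∀ a, 0 ≤ w a)
    (hsum : ∑ a, w a = 1) (f : α → ℝ) : ∃ a, f a ≤ ∑ b, w b * f b := by
  by_contra! h
  set m := ∑ b, w b * f b
  have hzero : ∑ a, w a * (f a - m) = 0 := by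
    simp [m, mul_sub, sum_sub_distrib, ← sum_mul, hsum]
  rw [sum_eq_zero_iff_of_nonneg fun a _ => mul_nonneg (hw a) (sub_nonneg.2 (h a).le)] at hzero
  have hw0 : ∀ a, w a = 0 := fun a =>
    (mul_eq_zero.1 (hzero a (mem_univ a))).resolve_right (sub_pos.2 (h a)).ne'
  simp [hw0] at hsum

lemma sum_prod_mul_infHammingDist_le {ι : Type*} [Fintype ι] [DecidableEq ι] {X : ι → Type*}
    [∀ i, Fintype (X i)] [∀ i, DecidableEq (X i)] {p : ∀ i, X i → ℝ}
    (hp_nonneg : ∀ i a, 0 ≤ p i a) (hp_sum : ∀ i, ∑ a, p i a = 1) (C : Finset (∀ i, X i))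
    (hC : C.Nonempty) (hμC : 0 < ∑ x ∈ C, ∏ i, p i (x i)) :
    ∑ y, (∏ i, p i (y i)) * (infHammingDist y C hC : ℝ) ≤
      √(Fintype.card ι / 2 * log (1 / ∑ x ∈ C, ∏ i, p i (x i))) := by
  have hw (y : ∀ i, X i) : 0 ≤ ∏ i, p i (y i) := prod_nonneg fun i _ => hp_nonneg i (y i)
  refine le_sqrt_of_forall_mul_sub_sq_le
    (sum_nonneg fun y _ => mul_nonneg (hw y) (Nat.cast_nonneg _)) (Nat.cast_nonneg _) fun t => ?_
  obtain ⟨x₀, -⟩ := id hC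
  have mgf := partialExpect_exp_le p hp_nonneg hp_sum
    (hasBoundedDifferences_infHammingDist C hC) (-t) univ x₀
  simp only [partialExpect_univ, Pi.one_apply, one_pow, sum_const, card_univ, nsmul_eq_mul,
    mul_one] at mgf
  have hμle : ∑ x ∈ C, ∏ i, p i (x i) ≤
      ∑ y, (∏ i, p i (y i)) * exp (-t * infHammingDist y C hC) :=
    calc ∑ x ∈ C, ∏ i, p i (x i)
        = ∑ x ∈ C, (∏ i, p i (x i)) * exp (-t * infHammingDist x C hC) :=
          sum_congr rfl fun x hx => by simp [infHammingDist_eq_zero hC hx]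
      _ ≤ _ := sum_le_sum_of_subset_of_nonneg (subset_univ C)
          fun y _ _ => mul_nonneg (hw y) (exp_pos _).le
  have := (log_le_iff_le_exp hμC).2 (hμle.trans mgf)
  rw [one_div, log_inv]
  linarith

/-- Blowing-up lemma, symmetric version: on a product of finite probability
spaces, any two sets of positive measure are at Hamming distance at most
`√((n/2)·ln(1/μ B)) + √((n/2)·ln(1/μ B'))`. -/
theorem blowing_up_symmetric {n : ℕ} (X : Fin n → Type*) [∀ i, Fintype (X i)]
    [∀ i, DecidableEq (X i)]
    (p : ∀ i, X i → ℝ) (hp_nonneg : ∀ i a, 0 ≤ p i a)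
    (hp_sum : ∀ i, ∑ a, p i a = 1)
    (B B' : Finset (∀ j, X j)) (hB : B.Nonempty) (hB' : B'.Nonempty)
    (μB μB' : ℝ)
    (hμB : μB = ∑ x ∈ B, ∏ i, p i (x i))
    (hμB' : μB' = ∑ x ∈ B', ∏ i, p i (x i))
    (hμBpos : 0 < μB) (hμB'pos : 0 < μB') :
    ∃ x ∈ B, ∃ y ∈ B',
      ((univ.filter (fun i : Fin n => x i ≠ y i)).card : ℝ) ≤
        Real.sqrt ((n / 2) * Real.log (1 / μB)) +
        Real.sqrt ((n / 2) * Real.log (1 / μB')) := by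
  subst hμB hμB'
  have hw_sum : ∑ y : ∀ i, X i, ∏ i, p i (y i) = 1 := by
    rw [← Fintype.prod_sum]; simp [hp_sum]
  obtain ⟨y, hy⟩ := exists_le_sum_mul (fun y => prod_nonneg fun i _ => hp_nonneg i (y i)) hw_sum
    fun y => (infHammingDist y B hB : ℝ) + infHammingDist y B' hB'
  obtain ⟨x, hx, x', hx', hxx'⟩ := exists_hammingDist_le_infHammingDist_add y hB hB'
  refine ⟨x, hx, x', hx', ?_⟩
  have hmean := add_le_add (sum_prod_mul_infHammingDist_le hp_nonneg hp_sum B hB hμBpos)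
    (sum_prod_mul_infHammingDist_le hp_nonneg hp_sum B' hB' hμB'pos)
  simp only [mul_add, sum_add_distrib, Fintype.card_fin] at hy hmean
  calc ((univ.filter (fun i : Fin n => x i ≠ x' i)).card : ℝ) = hammingDist x x' := rfl
    _ ≤ infHammingDist y B hB + infHammingDist y B' hB' := by exact_mod_cast hxx'
    _ ≤ _ := hy.trans hmean
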